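/- Let M := {r ∈ F \ {0} : there exists θ ∈ P(φ) \ ↓Z with ∏_{0≤i<per(θ)} 𝔴_{φ^i(θ)} = r^{per(θ)}}. Then: (1) if W(φ) ⊄ ↓Z and Γ = φ(Γ \ Z), then Eigen(σ_{φ,𝔴}, V^Γ) = F \ {0}; (2) if W(φ) ⊄ ↓Z and Γ ≠ φ(Γ \ Z), then Eigen(σ_{φ,𝔴}, V^Γ) = F; (3) if W(φ) ⊆ ↓Z and Γ = φ(Γ \ Z), then Eigen(σ_{φ,𝔴}, V^Γ) = M; (4) if W(φ) ⊆ ↓Z and Γ ≠ φ(Γ \ Z), then Eigen(σ_{φ,𝔴}, V^Γ) = M ∪ {0}. -/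
import Mathlib


open Function Set

/-- The weighted generalized shift `σ_{φ,𝔴}` on `V^Γ`,
sending `(x_α)_α` to `(𝔴_α • x_{φ(α)})_α`. -/
noncomputable def shiftW {F V Γ : Type*} [Field F] [AddCommGroup V] [Module F V]
    (φ : Γ → Γ) (w : Γ → F) : (Γ → V) →ₗ[F] (Γ → V) where
  toFun x := fun α => w α • x (φ α)
  map_add' x y := by funext α; simp
  map_smul' c x := by
    funext α
    simp only [Pi.smul_apply, RingHom.id_apply]
    rw [smul_comm]

/-- The set of eigenvalues of a linear self-map `T` of `W`:
all `r` such that `T x = r • x` for some nonzero `x`. -/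
def Eigen {F W : Type*} [Field F] [AddCommGroup W] [Module F W] (T : W →ₗ[F] W) : Set F :=
  {r | ∃ x : W, x ≠ 0 ∧ T x = r • x}

/-- `↓Z = ⋃_{n ≥ 0} φ^{-n}(Z)` where `Z = {α : 𝔴_α = 0}`. -/
def downZ {F Γ : Type*} [Field F] (φ : Γ → Γ) (w : Γ → F) : Set Γ :=
  ⋃ n : ℕ, φ^[n] ⁻¹' {α | w α = 0}

/-- Wandering points of `φ`: points `α` such that the sequence `(φ^n(α))_{n ≥ 1}` is injective. -/
def wanderSet {Γ : Type*} (φ : Γ → Γ) : Set Γ :=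
  {α | Function.Injective fun n : ℕ => φ^[n + 1] α}

/-- Periodic points of `φ`: points `α` with `φ^n(α) = α` for some `n ≥ 1`. -/
def periodicSet {Γ : Type*} (φ : Γ → Γ) : Set Γ :=
  {α | ∃ n : ℕ, 1 ≤ n ∧ φ^[n] α = α}

/-- `per(α) = min {n ≥ 1 : φ^n(α) = α}` for a periodic point `α`. -/
noncomputable def perOf {Γ : Type*} (φ : Γ → Γ) (α : Γ) : ℕ :=
  sInf {n : ℕ | 1 ≤ n ∧ φ^[n] α = α}

open Classical in
noncomputable def keyVec {F V Γ : Type*} [Field F] [AddCommGroup V] [Module F V]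
    (φ : Γ → Γ) (w : Γ → F) (r : F) (θ : Γ) (c : ℕ → V) : Γ → V := fun α =>
  if h : ∃ n : ℕ, ∃ m : ℕ, φ^[n] α = φ^[m] θ then
    (r⁻¹) ^ (Nat.find h) • (∏ i ∈ Finset.range (Nat.find h), w (φ^[i] α)) •
      c (Classical.choose (Nat.find_spec h))
  else 0

open Classical in
lemma key_mem {F V Γ : Type*} [Field F] [AddCommGroup V] [Module F V]
    (φ : Γ → Γ) (w : Γ → F) (r : F) (hr : r ≠ 0) (θ : Γ) (c : ℕ → V) (hc0 : c 0 ≠ 0)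
    (hrec : ∀ n, w (φ^[n] θ) • c (n + 1) = r • c n)
    (hwd : ∀ n m, φ^[n] θ = φ^[m] θ → c n = c m) :
    r ∈ Eigen (shiftW (V := V) φ w) := by
  set x : Γ → V := keyVec φ w r θ c with hxdef
  have main : ∀ (α : Γ) (n m : ℕ), φ^[n] α = φ^[m] θ →
      r ^ n • x α = (∏ i ∈ Finset.range n, w (φ^[i] α)) • c m := by
    intro α n m e
    have h : ∃ n : ℕ, ∃ m : ℕ, φ^[n] α = φ^[m] θ := ⟨n, m, e⟩
    set N := Nat.find h with hNdef
    set m₀ := Classical.choose (Nat.find_spec h) with hm0def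
    have e₀ : φ^[N] α = φ^[m₀] θ := Classical.choose_spec (Nat.find_spec h)
    have hxα : x α = (r⁻¹) ^ N • (∏ i ∈ Finset.range N, w (φ^[i] α)) • c m₀ := by
      rw [hxdef]; unfold keyVec; rw [dif_pos h]
    have claimA : ∀ k mm, φ^[k] (φ^[N] α) = φ^[mm] θ →
        (∏ i ∈ Finset.range k, w (φ^[i] (φ^[N] α))) • c mm = r ^ k • c m₀ := by
      intro k
      induction k with
      | zero =>
        intro mm e1
        simp only [Function.iterate_zero_apply] at e1
        simp only [Finset.range_zero, Finset.prod_empty, one_smul, pow_zero]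
        exact hwd mm m₀ (by rw [← e1, e₀])
      | succ k ih =>
        intro mm e1
        have ek : φ^[k] (φ^[N] α) = φ^[k + m₀] θ := by
          rw [e₀, ← Function.iterate_add_apply]
        have ek1 : φ^[mm] θ = φ^[k + m₀ + 1] θ := by
          rw [← e1, Function.iterate_succ_apply', Function.iterate_succ_apply', ek]
        have hcmm : c mm = c (k + m₀ + 1) := hwd mm (k + m₀ + 1) ek1
        have hr1 : w (φ^[k] (φ^[N] α)) • c (k + m₀ + 1) = r • c (k + m₀) := by
          rw [ek]; exact hrec (k + m₀)
        have ihk := ih (k + m₀) ek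
        rw [Finset.prod_range_succ, hcmm, mul_smul, hr1, smul_comm, ihk,
          smul_smul, ← pow_succ']
    have hNle : N ≤ n := Nat.find_le ⟨m, e⟩
    obtain ⟨k, rfl⟩ : ∃ k, n = N + k := ⟨n - N, by omega⟩
    have e2 : φ^[k] (φ^[N] α) = φ^[m] θ := by
      rw [← Function.iterate_add_apply, add_comm k N]; exact e
    have hA := claimA k m e2
    have hprodsplit : (∏ i ∈ Finset.range (N + k), w (φ^[i] α)) =
        (∏ i ∈ Finset.range N, w (φ^[i] α)) * ∏ i ∈ Finset.range k, w (φ^[i] (φ^[N] α)) := by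
      rw [Finset.prod_range_add]
      congr 1
      refine Finset.prod_congr rfl fun i _ => ?_
      rw [← Function.iterate_add_apply, add_comm i N]
    have hpow : r ^ (N + k) * r⁻¹ ^ N = r ^ k := by
      rw [pow_add, mul_comm (r ^ N), mul_assoc, ← mul_pow, mul_inv_cancel₀ hr, one_pow, mul_one]
    rw [hxα, smul_smul, hpow, smul_comm, ← hA, smul_smul, ← hprodsplit]
  refine ⟨x, ?_, ?_⟩
  · have h0 := main θ 0 0 rfl
    simp only [pow_zero, one_smul, Finset.range_zero, Finset.prod_empty] at h0
    intro hx0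
    rw [hx0] at h0
    exact hc0 (by simpa using h0.symm)
  · funext α
    show w α • x (φ α) = r • x α
    by_cases h : ∃ n : ℕ, ∃ m : ℕ, φ^[n] α = φ^[m] θ
    · obtain ⟨n, m, e⟩ := h
      have e1 : φ^[n + 1] α = φ^[m + 1] θ := by
        rw [Function.iterate_succ_apply', Function.iterate_succ_apply', e]
      have e2 : φ^[n] (φ α) = φ^[m + 1] θ := by
        rw [← Function.iterate_succ_apply]; exact e1
      have h1 := main α (n + 1) (m + 1) e1
      have h2 := main (φ α) n (m + 1) e2
      have h3 : (∏ i ∈ Finset.range (n + 1), w (φ^[i] α)) =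
          (∏ i ∈ Finset.range n, w (φ^[i] (φ α))) * w α := by
        rw [Finset.prod_range_succ']
        simp [Function.iterate_succ_apply]
      have h5 : r ^ n • (w α • x (φ α)) = r ^ n • (r • x α) := by
        conv_lhs => rw [smul_smul, mul_comm (r ^ n) (w α), mul_smul, h2, smul_smul,
          mul_comm (w α), ← h3, ← h1, pow_succ, mul_smul]
      have := congrArg (fun y => (r ^ n)⁻¹ • y) h5
      simpa [inv_smul_smul₀ (pow_ne_zero n hr)] using this
    · have hx1 : x α = 0 := by rw [hxdef]; unfold keyVec; rw [dif_neg h]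
      have h' : ¬ ∃ n : ℕ, ∃ m : ℕ, φ^[n] (φ α) = φ^[m] θ := by
        rintro ⟨n, m, e⟩
        exact h ⟨n + 1, m, by rw [Function.iterate_succ_apply]; exact e⟩
      have hx2 : x (φ α) = 0 := by rw [hxdef]; unfold keyVec; rw [dif_neg h']
      rw [hx1, hx2, smul_zero, smul_zero]

lemma notMem_downZ_iff {F Γ : Type*} [Field F] (φ : Γ → Γ) (w : Γ → F) (θ : Γ) :
    θ ∉ downZ φ w ↔ ∀ n : ℕ, w (φ^[n] θ) ≠ 0 := by
  simp [downZ]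

lemma zero_mem_eigen_iff {F V Γ : Type*} [Field F] [AddCommGroup V] [Module F V] [Nontrivial V]
    (φ : Γ → Γ) (w : Γ → F) :
    (0 : F) ∈ Eigen (shiftW (V := V) φ w) ↔ φ '' {α : Γ | w α ≠ 0} ≠ Set.univ := by
  constructor
  · rintro ⟨x, hx, he⟩ himg
    apply hx
    funext β
    have hβ : β ∈ φ '' {α : Γ | w α ≠ 0} := himg ▸ Set.mem_univ β
    obtain ⟨α, hα, rfl⟩ := hβ
    have := congrFun he α
    simp only [zero_smul, Pi.zero_apply] at this
    have : w α • x (φ α) = 0 := this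
    rcases smul_eq_zero.1 this with h | h
    · exact absurd h hα
    · exact h
  · intro himg
    have : ∃ β : Γ, β ∉ φ '' {α : Γ | w α ≠ 0} := by
      by_contra hc
      push_neg at hc
      exact himg (Set.eq_univ_of_forall hc)
    obtain ⟨β, hβ⟩ := this
    obtain ⟨v, hv⟩ := exists_ne (0 : V)
    classical
    refine ⟨fun γ => if γ = β then v else 0, ?_, ?_⟩
    · intro h0
      have := congrFun h0 β
      simp at this
      exact hv this
    · funext α
      show w α • (if φ α = β then v else 0) = _
      simp only [zero_smul, Pi.zero_apply]
      by_cases hφ : φ α = β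
      · have hwα : w α = 0 := by
          by_contra hw
          exact hβ ⟨α, hw, hφ⟩
        simp [hφ, hwα]
      · simp [hφ]

lemma wander_eigen {F V Γ : Type*} [Field F] [AddCommGroup V] [Module F V] [Nontrivial V]
    (φ : Γ → Γ) (w : Γ → F) (θ : Γ) (hθ : θ ∈ wanderSet φ) (hz : θ ∉ downZ φ w)
    (r : F) (hr : r ≠ 0) : r ∈ Eigen (shiftW (V := V) φ w) := by
  rw [notMem_downZ_iff] at hz
  obtain ⟨v, hv⟩ := exists_ne (0 : V)
  have horb : ∀ n m : ℕ, φ^[n] θ = φ^[m] θ → n = m := by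
    intro n m e
    have : (fun k : ℕ => φ^[k + 1] θ) n = (fun k : ℕ => φ^[k + 1] θ) m := by
      simp only [Function.iterate_succ_apply', e]
    exact hθ this
  refine key_mem φ w r hr θ
    (fun n => ((∏ i ∈ Finset.range n, w (φ^[i] θ))⁻¹ * r ^ n) • v) ?_ ?_ ?_
  · simpa using hv
  · intro n
    rw [smul_smul, smul_smul, Finset.prod_range_succ, mul_inv]
    have hpn : (∏ i ∈ Finset.range n, w (φ^[i] θ)) ≠ 0 :=
      Finset.prod_ne_zero_iff.2 fun i _ => hz i
    congr 1
    field_simp [hz n, hpn]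
    ring
  · intro n m e
    rw [horb n m e]

lemma perOf_eq_minimalPeriod {Γ : Type*} (φ : Γ → Γ) (θ : Γ) (hθ : θ ∈ periodicSet φ) :
    perOf φ θ = Function.minimalPeriod φ θ := by
  obtain ⟨n, hn1, hnθ⟩ := hθ
  have hne : {n : ℕ | 1 ≤ n ∧ φ^[n] θ = θ}.Nonempty := ⟨n, hn1, hnθ⟩
  have hmem := Nat.sInf_mem hne
  have hpp : Function.IsPeriodicPt φ (perOf φ θ) θ := hmem.2
  have hpos : 0 < perOf φ θ := hmem.1
  have hmp : θ ∈ Function.periodicPts φ := ⟨perOf φ θ, hpos, hpp⟩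
  refine le_antisymm (Nat.sInf_le ⟨?_, ?_⟩) (Function.IsPeriodicPt.minimalPeriod_le hpos hpp)
  · exact Function.minimalPeriod_pos_of_mem_periodicPts hmp
  · exact Function.isPeriodicPt_minimalPeriod φ θ

lemma M_eigen {F V Γ : Type*} [Field F] [AddCommGroup V] [Module F V] [Nontrivial V]
    (φ : Γ → Γ) (w : Γ → F) (θ : Γ) (hθ : θ ∈ periodicSet φ) (hz : θ ∉ downZ φ w)
    (r : F) (hr : r ≠ 0)
    (hprod : ∏ i ∈ Finset.range (perOf φ θ), w (φ^[i] θ) = r ^ perOf φ θ) :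
    r ∈ Eigen (shiftW (V := V) φ w) := by
  rw [notMem_downZ_iff] at hz
  obtain ⟨v, hv⟩ := exists_ne (0 : V)
  set p := perOf φ θ with hpdef
  obtain ⟨n0, hn1, hn2⟩ := hθ
  have hmem := Nat.sInf_mem (⟨n0, hn1, hn2⟩ : {n : ℕ | 1 ≤ n ∧ φ^[n] θ = θ}.Nonempty)
  have hpos : 0 < p := hmem.1
  have hpp : φ^[p] θ = θ := hmem.2
  have hmp : p = Function.minimalPeriod φ θ := perOf_eq_minimalPeriod φ θ ⟨n0, hn1, hn2⟩
  set c : ℕ → V := fun n => ((∏ i ∈ Finset.range n, w (φ^[i] θ))⁻¹ * r ^ n) • v with hcdef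
  have cper : ∀ n, c (n + p) = c n := by
    intro n
    have hsplit : (∏ i ∈ Finset.range (p + n), w (φ^[i] θ)) =
        r ^ p * ∏ i ∈ Finset.range n, w (φ^[i] θ) := by
      rw [Finset.prod_range_add, hprod]
      congr 1
      refine Finset.prod_congr rfl fun i _ => ?_
      rw [add_comm p i, Function.iterate_add_apply, hpp]
    rw [hcdef]
    simp only
    rw [add_comm n p, hsplit, mul_inv, pow_add]
    have hpn : (∏ i ∈ Finset.range n, w (φ^[i] θ)) ≠ 0 :=
      Finset.prod_ne_zero_iff.2 fun i _ => hz i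
    congr 1
    field_simp [pow_ne_zero p hr, hpn]
  have cmod : ∀ n, c n = c (n % p) := by
    intro n
    induction n using Nat.strong_induction_on with
    | _ n ih =>
      by_cases hlt : n < p
      · rw [Nat.mod_eq_of_lt hlt]
      · push_neg at hlt
        have h1 : n - p + p = n := by omega
        have h2 : n % p = (n - p) % p := by
          conv_lhs => rw [← h1]
          rw [Nat.add_mod_right]
        rw [← h1, cper, ih (n - p) (by omega), Nat.add_mod_right]
  refine key_mem φ w r hr θ c ?_ ?_ ?_
  · simpa [hcdef] using hv
  · intro n
    rw [hcdef]
    simp only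
    rw [smul_smul, smul_smul, Finset.prod_range_succ, mul_inv]
    have hpn : (∏ i ∈ Finset.range n, w (φ^[i] θ)) ≠ 0 :=
      Finset.prod_ne_zero_iff.2 fun i _ => hz i
    congr 1
    field_simp [hz n, hpn]
    ring
  · intro n m e
    have e1 : φ^[n % p] θ = φ^[m % p] θ := by
      rw [hmp] at *
      rw [Function.iterate_mod_minimalPeriod_eq, Function.iterate_mod_minimalPeriod_eq, e]
    have hinj := Function.iterate_injOn_Iio_minimalPeriod (f := φ) (x := θ)
    have hn : n % p < p := Nat.mod_lt _ hpos
    have hm : m % p < p := Nat.mod_lt _ hpos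
    have : n % p = m % p := by
      refine hinj ?_ ?_ e1 <;> · rw [← hmp]; simpa [Set.mem_Iio] using ‹_ % p < p›
    rw [cmod n, cmod m, this]

lemma eigen_structure {F V Γ : Type*} [Field F] [AddCommGroup V] [Module F V]
    (φ : Γ → Γ) (w : Γ → F) (r : F) (hr : r ≠ 0)
    (h : r ∈ Eigen (shiftW (V := V) φ w)) :
    (∃ θ ∈ wanderSet φ, θ ∉ downZ φ w) ∨
    (∃ θ ∈ periodicSet φ, θ ∉ downZ φ w ∧
      ∏ i ∈ Finset.range (perOf φ θ), w (φ^[i] θ) = r ^ perOf φ θ) := by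
  obtain ⟨x, hx0, he⟩ := h
  have heq : ∀ α, w α • x (φ α) = r • x α := fun α => congrFun he α
  obtain ⟨α, hα⟩ := Function.ne_iff.1 hx0
  simp only [Pi.zero_apply] at hα
  have chain : ∀ n : ℕ, x (φ^[n] α) ≠ 0 ∧ w (φ^[n] α) ≠ 0 := by
    intro n
    induction n with
    | zero =>
      simp only [Function.iterate_zero_apply]
      refine ⟨hα, fun hw => ?_⟩
      have h2 := heq α
      rw [hw, zero_smul] at h2
      exact hα (by simpa [smul_eq_zero, hr] using h2.symm)
    | succ n ih =>
      have hne : r • x (φ^[n] α) ≠ 0 := smul_ne_zero hr ih.1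
      have h1 : w (φ^[n] α) • x (φ^[n + 1] α) ≠ 0 := by
        rw [Function.iterate_succ_apply']
        rw [heq (φ^[n] α)]
        exact hne
      have hx : x (φ^[n + 1] α) ≠ 0 := by
        intro h0; rw [h0, smul_zero] at h1; exact h1 rfl
      refine ⟨hx, ?_⟩
      intro hw
      have := heq (φ^[n + 1] α)
      rw [hw, zero_smul] at this
      exact hx (by simpa [smul_eq_zero, hr] using this.symm)
  by_cases hinj : Function.Injective fun n : ℕ => φ^[n + 1] α
  · left
    exact ⟨α, hinj, (notMem_downZ_iff φ w α).2 fun n => (chain n).2⟩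
  · right
    rw [Function.not_injective_iff] at hinj
    obtain ⟨a, b, hab, hne⟩ := hinj
    obtain ⟨a, b, hab', hab⟩ : ∃ a b : ℕ, a < b ∧ φ^[a + 1] α = φ^[b + 1] α := by
      rcases hne.lt_or_gt with h | h
      · exact ⟨a, b, h, hab⟩
      · exact ⟨b, a, h, hab.symm⟩
    set θ := φ^[a + 1] α with hθdef
    have hper : φ^[b - a] θ = θ := by
      rw [hθdef, ← Function.iterate_add_apply]
      have : b - a + (a + 1) = b + 1 := by omega
      rw [this, ← hab]
    have hθp : θ ∈ periodicSet φ := ⟨b - a, by omega, hper⟩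
    have hθorb : ∀ n : ℕ, φ^[n] θ = φ^[n + (a + 1)] α := fun n =>
      (Function.iterate_add_apply φ n (a + 1) α).symm
    have hθz : θ ∉ downZ φ w := by
      rw [notMem_downZ_iff]
      intro n
      rw [hθorb n]
      exact (chain (n + (a + 1))).2
    refine ⟨θ, hθp, hθz, ?_⟩
    have tel : ∀ n : ℕ, (∏ i ∈ Finset.range n, w (φ^[i] θ)) • x (φ^[n] θ) =
        r ^ n • x θ := by
      intro n
      induction n with
      | zero => simp
      | succ n ih =>
        have h9 : w (φ^[n] θ) • x (φ (φ^[n] θ)) = r • x (φ^[n] θ) := heq _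
        calc (∏ i ∈ Finset.range (n + 1), w (φ^[i] θ)) • x (φ^[n + 1] θ)
            = (∏ i ∈ Finset.range n, w (φ^[i] θ)) • (w (φ^[n] θ) • x (φ (φ^[n] θ))) := by
              rw [Finset.prod_range_succ, Function.iterate_succ_apply', mul_smul]
          _ = (∏ i ∈ Finset.range n, w (φ^[i] θ)) • (r • x (φ^[n] θ)) := by rw [h9]
          _ = r • ((∏ i ∈ Finset.range n, w (φ^[i] θ)) • x (φ^[n] θ)) := by rw [smul_comm]
          _ = r • (r ^ n • x θ) := by rw [ih]
          _ = r ^ (n + 1) • x θ := by rw [smul_smul, ← pow_succ']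
    have hmem := Nat.sInf_mem (⟨b - a, by omega, hper⟩ :
      {n : ℕ | 1 ≤ n ∧ φ^[n] θ = θ}.Nonempty)
    have hpp : φ^[perOf φ θ] θ = θ := hmem.2
    have := tel (perOf φ θ)
    rw [hpp] at this
    have hxθ : x θ ≠ 0 := by
      have h9 := (chain (a + 1)).1
      rwa [show φ^[a + 1] α = θ from hθdef.symm] at h9
    by_contra hne'
    have hsub : ((∏ i ∈ Finset.range (perOf φ θ), w (φ^[i] θ)) - r ^ perOf φ θ) • x θ = 0 := by
      rw [sub_smul, this, sub_self]
    have hs0 : (∏ i ∈ Finset.range (perOf φ θ), w (φ^[i] θ)) - r ^ perOf φ θ ≠ 0 :=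
      sub_ne_zero.2 hne'
    have := congrArg (fun y => ((∏ i ∈ Finset.range (perOf φ θ), w (φ^[i] θ)) - r ^ perOf φ θ)⁻¹ • y) hsub
    simp only [inv_smul_smul₀ hs0, smul_zero] at this
    exact hxθ this

theorem eigenvalues_of_weighted_generalized_shift
    {F V Γ : Type*} [Field F] [AddCommGroup V] [Module F V] [Nonempty Γ] [Nontrivial V]
    (φ : Γ → Γ) (w : Γ → F) (M : Set F)
    (hM : M = {r : F | r ≠ 0 ∧ ∃ θ ∈ periodicSet φ, θ ∉ downZ φ w ∧
      ∏ i ∈ Finset.range (perOf φ θ), w (φ^[i] θ) = r ^ perOf φ θ}) :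
    (¬ wanderSet φ ⊆ downZ φ w → φ '' {α : Γ | w α ≠ 0} = Set.univ →
      Eigen (shiftW (V := V) φ w) = {r : F | r ≠ 0}) ∧
    (¬ wanderSet φ ⊆ downZ φ w → φ '' {α : Γ | w α ≠ 0} ≠ Set.univ →
      Eigen (shiftW (V := V) φ w) = (Set.univ : Set F)) ∧
    (wanderSet φ ⊆ downZ φ w → φ '' {α : Γ | w α ≠ 0} = Set.univ →
      Eigen (shiftW (V := V) φ w) = M) ∧
    (wanderSet φ ⊆ downZ φ w → φ '' {α : Γ | w α ≠ 0} ≠ Set.univ →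
      Eigen (shiftW (V := V) φ w) = M ∪ {0}) := by
  refine ⟨?_, ?_, ?_, ?_⟩
  · intro hD hI
    obtain ⟨θ, hθw, hθz⟩ := Set.not_subset.1 hD
    ext r
    constructor
    · intro hre
      intro hr0
      exact ((zero_mem_eigen_iff (V := V) φ w).1 (hr0 ▸ hre)) hI
    · intro hr
      exact wander_eigen φ w θ hθw hθz r hr
  · intro hD hI
    obtain ⟨θ, hθw, hθz⟩ := Set.not_subset.1 hD
    ext r
    simp only [Set.mem_univ, iff_true]
    by_cases hr : r = 0
    · exact hr ▸ (zero_mem_eigen_iff (V := V) φ w).2 hI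
    · exact wander_eigen φ w θ hθw hθz r hr
  · intro hD hI
    ext r
    constructor
    · intro hre
      have hr : r ≠ 0 := fun hr0 =>
        ((zero_mem_eigen_iff (V := V) φ w).1 (hr0 ▸ hre)) hI
      rcases eigen_structure φ w r hr hre with ⟨θ, hθw, hθz⟩ | ⟨θ, hθp, hθz, hθe⟩
      · exact absurd (hD hθw) hθz
      · rw [hM]
        exact ⟨hr, θ, hθp, hθz, hθe⟩
    · intro hrM
      rw [hM] at hrM
      obtain ⟨hr, θ, hθp, hθz, hθe⟩ := hrM
      exact M_eigen φ w θ hθp hθz r hr hθe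
  · intro hD hI
    ext r
    constructor
    · intro hre
      by_cases hr : r = 0
      · exact Or.inr hr
      · left
        rcases eigen_structure φ w r hr hre with ⟨θ, hθw, hθz⟩ | ⟨θ, hθp, hθz, hθe⟩
        · exact absurd (hD hθw) hθz
        · rw [hM]
          exact ⟨hr, θ, hθp, hθz, hθe⟩
    · rintro (hrM | hr0)
      · rw [hM] at hrM
        obtain ⟨hr, θ, hθp, hθz, hθe⟩ := hrM
        exact M_eigen φ w θ hθp hθz r hr hθe
      · exact hr0 ▸ (zero_mem_eigen_iff (V := V) φ w).2 hI
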